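/- Let reads be assigned snapshot timestamps and writes commit timestamps from a strictly increasing global counter. If each read query with timestamp t observes exactly the set of versions with creation timestamp ≤ t, and write queries are serializable in timestamp order, then the schedule consisting of all reads and writes is conflict-serializable, with serial order: writes ordered by commit timestamp and each read placed immediately after the write whose timestamp equals its snapshot timestamp. -/

import Mathlib

/-!
Every dependency edge strictly increases the rank that places the write with commit timestamp
`i + 1` at `2 (i + 1)` and a read with snapshot timestamp `t` at `2 t + 1`, i.e. right after the
write it reads from. Reads never depend on reads, so reads sharing a timestamp need no tiebreak.
A cycle would make the rank of a transaction exceed itself.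
-/

theorem Relation.TransGen.lt_of_lt_of_rel {α β : Type*} [Preorder β] {r : α → α → Prop}
    {f : α → β} (hf : ∀ x y, r x y → f x < f y) {x y : α} (hxy : Relation.TransGen r x y) :
    f x < f y := by
  have := hxy.lift f (p := (· < ·)) hf
  rwa [Relation.transGen_eq_self] at this

theorem Relation.not_transGen_self_of_lt_of_rel {α β : Type*} [Preorder β] {r : α → α → Prop}
    {f : α → β} (hf : ∀ x y, r x y → f x < f y) (x : α) : ¬ Relation.TransGen r x x :=
  fun hx => lt_irrefl _ (hx.lt_of_lt_of_rel hf)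

def serialRank {n : ℕ} {R : Type*} (t : R → ℕ) : Fin n ⊕ R → ℕ
  | .inl i => 2 * ((i : ℕ) + 1)
  | .inr q => 2 * t q + 1

theorem serialRank_lt_of_dep {R : Type*} {n : ℕ} {t : R → ℕ}
    {Dep : (Fin n ⊕ R) → (Fin n ⊕ R) → Prop}
    (hWW : ∀ i j : Fin n, Dep (.inl i) (.inl j) → (i : ℕ) < (j : ℕ))
    (hWR : ∀ (i : Fin n) (q : R), Dep (.inl i) (.inr q) → (i : ℕ) + 1 ≤ t q)
    (hRW : ∀ (q : R) (j : Fin n), Dep (.inr q) (.inl j) → t q < (j : ℕ) + 1)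
    (hRR : ∀ q q' : R, ¬ Dep (.inr q) (.inr q')) :
    ∀ x y, Dep x y → serialRank t x < serialRank t y
  | .inl i, .inl j, h => by have := hWW i j h; simp only [serialRank]; omega
  | .inl i, .inr q, h => by have := hWR i q h; simp only [serialRank]; omega
  | .inr q, .inl j, h => by have := hRW q j h; simp only [serialRank]; omega
  | .inr q, .inr q', h => absurd h (hRR q q')

theorem snapshot_reads_serializable_general {R : Type*} (n : ℕ)
    (t : R → ℕ)
    (Dep : (Fin n ⊕ R) → (Fin n ⊕ R) → Prop)
    (hWW : ∀ i j : Fin n, Dep (.inl i) (.inl j) → (i : ℕ) < (j : ℕ))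
    (hWR : ∀ (i : Fin n) (q : R), Dep (.inl i) (.inr q) → (i : ℕ) + 1 ≤ t q)
    (hRW : ∀ (q : R) (j : Fin n), Dep (.inr q) (.inl j) → t q < (j : ℕ) + 1)
    (hRR : ∀ q q' : R, ¬ Dep (.inr q) (.inr q')) :
    ∀ x : Fin n ⊕ R, ¬ Relation.TransGen Dep x x :=
  Relation.not_transGen_self_of_lt_of_rel (serialRank_lt_of_dep hWW hWR hRW hRR)

/-- Lemma 1: writes `W_i` (`i : Fin n`, commit timestamp `i+1`) and reads `q`
with snapshot timestamp `t q ≤ n`.  If dependency edges only go from earlier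
writes to later writes, from `W_i` to a read `q` only when `i+1 ≤ t q`, from a
read `q` to `W_j` only when `t q < j+1`, and never between two reads, then the
dependency graph is acyclic, i.e. the schedule is conflict-serializable. -/
theorem snapshot_reads_serializable {R : Type*} (n : ℕ)
    (t : R → ℕ) (ht : ∀ q, t q ≤ n)
    (Dep : (Fin n ⊕ R) → (Fin n ⊕ R) → Prop)
    (hWW : ∀ i j : Fin n, Dep (.inl i) (.inl j) → (i : ℕ) < (j : ℕ))
    (hWR : ∀ (i : Fin n) (q : R), Dep (.inl i) (.inr q) → (i : ℕ) + 1 ≤ t q)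
    (hRW : ∀ (q : R) (j : Fin n), Dep (.inr q) (.inl j) → t q < (j : ℕ) + 1)
    (hRR : ∀ q q' : R, ¬ Dep (.inr q) (.inr q')) :
    ∀ x : Fin n ⊕ R, ¬ Relation.TransGen Dep x x :=
  snapshot_reads_serializable_general n t Dep hWW hWR hRW hRR
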